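/- Exact bias decomposition of the doubly robust functional: let e_a be a version of the propensity score and m_a a version of the outcome regression E[Y | X, A = a]; let e* : 𝒳 → ℝ be measurable with e*(x) ≥ ε for all x (ε > 0) and g : 𝒳 → ℝ measurable with g ∘ X integrable. Then for every measurable subgroup w ⊆ 𝒳, E[ 1{X ∈ w} · ( g(X) + 1{A = a} · (Y − g(X)) / e*(X) ) ] − ∫_{{X ∈ w}} m_a(X) dP = E[ 1{X ∈ w} · (e_a(X) − e*(X)) · (m_a(X) − g(X)) / e*(X) ]. -/

import Mathlib

open MeasureTheory

/-!
Write `S = {A = a}` and `ψ = 1_w / e*`, a bounded function of the covariates. The correction term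
is `E[ψ(X) 1_S (Y - g(X))]`. Conditioning on `X`, the outcome regression replaces `1_S Y` by
`1_S m_a(X)`, and then the propensity score replaces `1_S` by `e_a(X)`; both are instances of
pulling a `σ(X)`-measurable factor out of a conditional expectation. The correction term thus
equals `E[ψ(X) e_a(X) (m_a(X) - g(X))]`, and subtracting `E[1_w(X) (m_a(X) - g(X))]` leaves the
product of the two errors.
-/

section Indicator

variable {Ω 𝒳 : Type*} {X : Ω → 𝒳}

theorem abs_indicator_inv_le {ε : ℝ} (hε : 0 < ε) {E : 𝒳 → ℝ} (hE : ∀ x, ε ≤ E x)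
    (w : Set 𝒳) (x : 𝒳) : |w.indicator (fun x => (E x)⁻¹) x| ≤ ε⁻¹ := by
  by_cases hx : x ∈ w
  · rw [Set.indicator_of_mem hx, abs_inv]
    exact inv_anti₀ hε ((hE x).trans (le_abs_self _))
  · simp [hx, hε.le]

theorem indicator_preimage_add_indicator_div (w : Set 𝒳) (S : Set Ω) (G R : Ω → ℝ)
    (E : 𝒳 → ℝ) (ω : Ω) :
    (X ⁻¹' w).indicator (fun ω' => G ω' + S.indicator (fun ω'' => R ω'' / E (X ω'')) ω') ω
      = (X ⁻¹' w).indicator G ω + w.indicator (fun x => (E x)⁻¹) (X ω) * S.indicator R ω := by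
  by_cases hw : X ω ∈ w <;> by_cases hS : ω ∈ S <;> simp [hw, hS, div_eq_inv_mul]

theorem indicator_preimage_sub_mul_div {E : 𝒳 → ℝ} (hE : ∀ x, E x ≠ 0) (w : Set 𝒳)
    (e : 𝒳 → ℝ) (D : Ω → ℝ) (ω : Ω) :
    (X ⁻¹' w).indicator (fun ω' => (e (X ω') - E (X ω')) * D ω' / E (X ω')) ω
      = w.indicator (fun x => (E x)⁻¹) (X ω) * (e (X ω) * D ω) - (X ⁻¹' w).indicator D ω := by
  by_cases hw : X ω ∈ w
  · have := hE (X ω)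
    simp only [Set.indicator_of_mem hw, Set.indicator_of_mem (Set.mem_preimage.2 hw)]
    field_simp
  · simp [hw]

end Indicator

section PullOut

variable {Ω : Type*} {m m₀ : MeasurableSpace Ω} {μ : Measure Ω}

theorem condExp_ae_eq_of_forall_setIntegral_eq (hm : m ≤ m₀) [SigmaFinite (μ.trim hm)]
    {f h : Ω → ℝ} (hf : Integrable f μ) (hh : Integrable h μ)
    (hfh : ∀ s, MeasurableSet[m] s → ∫ x in s, f x ∂μ = ∫ x in s, h x ∂μ) :
    μ[f|m] =ᵐ[μ] μ[h|m] :=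
  ae_eq_condExp_of_forall_setIntegral_eq hm hh (fun _ _ _ => integrable_condExp.integrableOn)
    (fun s hs _ => by rw [setIntegral_condExp hm hf hs, hfh s hs])
    stronglyMeasurable_condExp.aestronglyMeasurable

theorem integral_mul_eq_of_forall_setIntegral_eq (hm : m ≤ m₀) [SigmaFinite (μ.trim hm)]
    {f h φ : Ω → ℝ} (hf : Integrable f μ) (hh : Integrable h μ)
    (hfh : ∀ s, MeasurableSet[m] s → ∫ x in s, f x ∂μ = ∫ x in s, h x ∂μ)
    (hφ : StronglyMeasurable[m] φ) (hφf : Integrable (φ * f) μ) (hφh : Integrable (φ * h) μ) :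
    ∫ x, φ x * f x ∂μ = ∫ x, φ x * h x ∂μ :=
  calc ∫ x, φ x * f x ∂μ = ∫ x, (μ[φ * f|m]) x ∂μ := (integral_condExp hm).symm
    _ = ∫ x, φ x * (μ[f|m]) x ∂μ :=
      integral_congr_ae (condExp_mul_of_stronglyMeasurable_left hφ hφf hf)
    _ = ∫ x, φ x * (μ[h|m]) x ∂μ := integral_congr_ae <| by
      filter_upwards [condExp_ae_eq_of_forall_setIntegral_eq hm hf hh hfh] with x hx
      rw [hx]
    _ = ∫ x, (μ[φ * h|m]) x ∂μ :=
      (integral_congr_ae (condExp_mul_of_stronglyMeasurable_left hφ hφh hh)).symm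
    _ = ∫ x, φ x * h x ∂μ := integral_condExp hm

end PullOut

section Covariates

variable {Ω 𝒳 : Type*} [MeasurableSpace Ω] [MeasurableSpace 𝒳] {μ : Measure Ω} {X : Ω → 𝒳}

theorem MeasureTheory.Integrable.comp_mul_of_abs_le {φ : 𝒳 → ℝ} (hX : Measurable X)
    (hφ : Measurable φ) {C : ℝ} (hφC : ∀ x, |φ x| ≤ C) {f : Ω → ℝ} (hf : Integrable f μ) :
    Integrable (fun ω => φ (X ω) * f ω) μ :=
  hf.bdd_mul (hφ.comp hX).aestronglyMeasurable (.of_forall fun ω => hφC (X ω))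

theorem integral_comp_mul_eq_of_forall_setIntegral_preimage_eq [IsFiniteMeasure μ]
    (hX : Measurable X) {f h : Ω → ℝ} (hf : Integrable f μ) (hh : Integrable h μ)
    (hfh : ∀ B, MeasurableSet B → ∫ ω in X ⁻¹' B, f ω ∂μ = ∫ ω in X ⁻¹' B, h ω ∂μ)
    {φ : 𝒳 → ℝ} (hφ : Measurable φ) (hφf : Integrable (fun ω => φ (X ω) * f ω) μ)
    (hφh : Integrable (fun ω => φ (X ω) * h ω) μ) :
    ∫ ω, φ (X ω) * f ω ∂μ = ∫ ω, φ (X ω) * h ω ∂μ :=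
  integral_mul_eq_of_forall_setIntegral_eq hX.comap_le hf hh
    (by rintro _ ⟨B, hB, rfl⟩; exact hfh B hB)
    (hφ.comp (comap_measurable X)).stronglyMeasurable hφf hφh

theorem integral_comp_mul_indicator_eq_of_propensity_of_regression
    [IsFiniteMeasure μ] (hX : Measurable X) {S : Set Ω} (hS : MeasurableSet S)
    {e : 𝒳 → ℝ} (he : Measurable e) {D : ℝ} (heD : ∀ x, |e x| ≤ D)
    (hePS : ∀ B, MeasurableSet B → ∫ ω in X ⁻¹' B, e (X ω) ∂μ = μ.real (X ⁻¹' B ∩ S))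
    {Y : Ω → ℝ} (hY : Integrable Y μ) {m : 𝒳 → ℝ} (hm : Measurable m)
    (hmX : Integrable (fun ω => m (X ω)) μ)
    (hmOR : ∀ B, MeasurableSet B →
      ∫ ω in X ⁻¹' B ∩ S, Y ω ∂μ = ∫ ω in X ⁻¹' B ∩ S, m (X ω) ∂μ)
    {ψ : 𝒳 → ℝ} (hψ : Measurable ψ) {C : ℝ} (hψC : ∀ x, |ψ x| ≤ C) :
    ∫ ω, ψ (X ω) * S.indicator Y ω ∂μ = ∫ ω, ψ (X ω) * (e (X ω) * m (X ω)) ∂μ := by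
  have hψm : Integrable (fun ω => ψ (X ω) * m (X ω)) μ := hmX.comp_mul_of_abs_le hX hψ hψC
  have heX : AEStronglyMeasurable (fun ω => e (X ω)) μ := (he.comp hX).aestronglyMeasurable
  have hS1 : Integrable (S.indicator fun _ => (1 : ℝ)) μ := (integrable_const 1).indicator hS
  calc ∫ ω, ψ (X ω) * S.indicator Y ω ∂μ
      = ∫ ω, ψ (X ω) * S.indicator (fun ω => m (X ω)) ω ∂μ := by
        refine integral_comp_mul_eq_of_forall_setIntegral_preimage_eq hX (hY.indicator hS)
          (hmX.indicator hS) (fun B hB => ?_) hψ ((hY.indicator hS).comp_mul_of_abs_le hX hψ hψC)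
          ((hmX.indicator hS).comp_mul_of_abs_le hX hψ hψC)
        rw [setIntegral_indicator hS, setIntegral_indicator hS, hmOR B hB]
    _ = ∫ ω, ψ (X ω) * m (X ω) * S.indicator (fun _ => (1 : ℝ)) ω ∂μ := by
        congr with ω
        by_cases hω : ω ∈ S <;> simp [hω]
    _ = ∫ ω, ψ (X ω) * m (X ω) * e (X ω) ∂μ := by
        refine integral_comp_mul_eq_of_forall_setIntegral_preimage_eq (φ := fun x => ψ x * m x)
          hX hS1 (Integrable.of_bound heX D (.of_forall fun ω => heD (X ω))) (fun B hB => ?_)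
          (hψ.mul hm)
          (hψm.mul_bdd (c := 1) hS1.aestronglyMeasurable (.of_forall fun ω => ?_))
          (hψm.mul_bdd heX (.of_forall fun ω => heD (X ω)))
        · rw [hePS B hB, setIntegral_indicator hS, setIntegral_const, smul_eq_mul, mul_one]
        · by_cases hω : ω ∈ S <;> simp [hω]
    _ = ∫ ω, ψ (X ω) * (e (X ω) * m (X ω)) ∂μ := by
        congr with ω
        ring

end Covariates

theorem dr_bias_decomposition_general
    {Ω : Type*} [MeasurableSpace Ω] (P : Measure Ω) [IsProbabilityMeasure P]
    {𝒳 : Type*} [MeasurableSpace 𝒳]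
    (X : Ω → 𝒳) (hX : Measurable X)
    (A : Ω → ℝ) (hA : Measurable A)
    (Y : Ω → ℝ) (hYint : Integrable Y P)
    (a : ℝ)
    -- a version of the propensity score, with 0 ≤ e_a ≤ 1
    (e : 𝒳 → ℝ) (he : Measurable e)
    (he01 : ∀ x, 0 ≤ e x ∧ e x ≤ 1)
    (hePS : ∀ B : Set 𝒳, MeasurableSet B →
      ∫ ω in X ⁻¹' B, e (X ω) ∂P = (P (X ⁻¹' B ∩ {ω | A ω = a})).toReal)
    -- a version of the outcome regression E[Y | X, A = a]
    (m : 𝒳 → ℝ) (hm : Measurable m)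
    (hmint : Integrable (fun ω => m (X ω)) P)
    (hmOR : ∀ B : Set 𝒳, MeasurableSet B →
      ∫ ω in X ⁻¹' B ∩ {ω | A ω = a}, Y ω ∂P
        = ∫ ω in X ⁻¹' B ∩ {ω | A ω = a}, m (X ω) ∂P)
    -- ANY measurable propensity model bounded below by ε > 0
    (estar : 𝒳 → ℝ) (hestar : Measurable estar)
    (ε : ℝ) (hε : 0 < ε) (hestarpos : ∀ x, ε ≤ estar x)
    -- ANY measurable outcome model with integrable composition
    (g : 𝒳 → ℝ) (hg : Measurable g)
    (hgint : Integrable (fun ω => g (X ω)) P)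
    -- the subgroup
    (w : Set 𝒳) (hw : MeasurableSet w) :
    (∫ ω, (X ⁻¹' w).indicator
        (fun ω' => g (X ω')
          + ({ω'' | A ω'' = a}).indicator
              (fun ω'' => (Y ω'' - g (X ω'')) / estar (X ω'')) ω') ω ∂P)
      - ∫ ω in X ⁻¹' w, m (X ω) ∂P
      = ∫ ω, (X ⁻¹' w).indicator
          (fun ω' => (e (X ω') - estar (X ω')) * (m (X ω') - g (X ω'))
            / estar (X ω')) ω ∂P := by
  set S := {ω | A ω = a}
  have hS : MeasurableSet S := hA (measurableSet_singleton a)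
  set ψ : 𝒳 → ℝ := w.indicator fun x => (estar x)⁻¹
  have hψ : Measurable ψ := hestar.inv.indicator hw
  have hψ_abs : ∀ x, |ψ x| ≤ ε⁻¹ := abs_indicator_inv_le hε hestarpos w
  have he_abs : ∀ x, |e x| ≤ 1 := fun x => abs_le.2 ⟨by linarith [he01 x], (he01 x).2⟩
  have hYg : Integrable (fun ω => Y ω - g (X ω)) P := hYint.sub hgint
  have hmg : Integrable (fun ω => m (X ω) - g (X ω)) P := hmint.sub hgint
  have hmgOR : ∀ B, MeasurableSet B → ∫ ω in X ⁻¹' B ∩ S, Y ω - g (X ω) ∂P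
      = ∫ ω in X ⁻¹' B ∩ S, m (X ω) - g (X ω) ∂P := fun B hB => by
    rw [integral_sub hYint.restrict hgint.restrict, integral_sub hmint.restrict hgint.restrict,
      hmOR B hB]
  have hipw := integral_comp_mul_indicator_eq_of_propensity_of_regression hX hS he he_abs hePS
    hYg (m := fun x => m x - g x) (hm.sub hg) hmg hmgOR hψ hψ_abs
  have hestar_ne : ∀ x, estar x ≠ 0 := fun x => (hε.trans_le (hestarpos x)).ne'
  simp_rw [indicator_preimage_add_indicator_div, indicator_preimage_sub_mul_div hestar_ne]
  rw [integral_add (hgint.indicator (hX hw))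
      ((hYg.indicator hS).comp_mul_of_abs_le hX hψ hψ_abs),
    integral_sub ((hmg.comp_mul_of_abs_le hX he he_abs).comp_mul_of_abs_le hX hψ hψ_abs)
      (hmg.indicator (hX hw)),
    integral_indicator (hX hw), integral_indicator (hX hw), hipw,
    integral_sub hmint.restrict hgint.restrict]
  ring

/-- Exact bias decomposition of the doubly robust functional:
`E[1{X ∈ w}(g(X) + 1{A = a}(Y − g(X))/e*(X))] − ∫_{X ∈ w} m_a(X) dP
  = E[1{X ∈ w}(e_a(X) − e*(X))(m_a(X) − g(X))/e*(X)]`. -/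
theorem dr_bias_decomposition
    {Ω : Type*} [MeasurableSpace Ω] (P : Measure Ω) [IsProbabilityMeasure P]
    {𝒳 : Type*} [MeasurableSpace 𝒳]
    (X : Ω → 𝒳) (hX : Measurable X)
    (A : Ω → ℝ) (hA : Measurable A) (hA01 : ∀ ω, A ω = 0 ∨ A ω = 1)
    (Y : Ω → ℝ) (hY : Measurable Y) (hYint : Integrable Y P)
    (a : ℝ) (ha : a = 0 ∨ a = 1)
    -- a version of the propensity score, with 0 ≤ e_a ≤ 1
    (e : 𝒳 → ℝ) (he : Measurable e)
    (he01 : ∀ x, 0 ≤ e x ∧ e x ≤ 1)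
    (hePS : ∀ B : Set 𝒳, MeasurableSet B →
      ∫ ω in X ⁻¹' B, e (X ω) ∂P = (P (X ⁻¹' B ∩ {ω | A ω = a})).toReal)
    -- a version of the outcome regression E[Y | X, A = a]
    (m : 𝒳 → ℝ) (hm : Measurable m)
    (hmint : Integrable (fun ω => m (X ω)) P)
    (hmOR : ∀ B : Set 𝒳, MeasurableSet B →
      ∫ ω in X ⁻¹' B ∩ {ω | A ω = a}, Y ω ∂P
        = ∫ ω in X ⁻¹' B ∩ {ω | A ω = a}, m (X ω) ∂P)
    -- ANY measurable propensity model bounded below by ε > 0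
    (estar : 𝒳 → ℝ) (hestar : Measurable estar)
    (ε : ℝ) (hε : 0 < ε) (hestarpos : ∀ x, ε ≤ estar x)
    -- ANY measurable outcome model with integrable composition
    (g : 𝒳 → ℝ) (hg : Measurable g)
    (hgint : Integrable (fun ω => g (X ω)) P)
    -- square integrability
    (hmg2 : MemLp (fun ω => m (X ω) - g (X ω)) 2 P)
    (hee2 : MemLp (fun ω => e (X ω) - estar (X ω)) 2 P)
    -- the subgroup
    (w : Set 𝒳) (hw : MeasurableSet w) :
    (∫ ω, (X ⁻¹' w).indicator
        (fun ω' => g (X ω')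
          + ({ω'' | A ω'' = a}).indicator
              (fun ω'' => (Y ω'' - g (X ω'')) / estar (X ω'')) ω') ω ∂P)
      - ∫ ω in X ⁻¹' w, m (X ω) ∂P
      = ∫ ω, (X ⁻¹' w).indicator
          (fun ω' => (e (X ω') - estar (X ω')) * (m (X ω') - g (X ω'))
            / estar (X ω')) ω ∂P :=
  dr_bias_decomposition_general P X hX A hA Y hYint a e he he01 hePS m hm hmint hmOR estar hestar ε
    hε hestarpos g hg hgint w hw
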